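/- arXiv:1010.4750 — 2 statements merged into one kernel-verified Lean document; each statement's English description precedes it below -/
import Mathlib

section
/- Let n be a positive integer and let f ∈ ℚ(q)[z_1,…,z_n] be a polynomial in n variables over the field of rational functions ℚ(q). If f(q^{m_1},…,q^{m_n}) lies in ℤ[q^{±1}] for all integers m_1,…,m_n, then f is a ℤ[q^{±1}]-linear combination of the polynomials ∏_{i=1}^{n} (z_i;q)_{k_i}/(q;q)_{k_i} with k_1,…,k_n nonnegative integers. -/
noncomputable section

/-- The field `ℚ(q)` of rational functions in `q` over `ℚ`. -/
abbrev Kq := RatFunc ℚ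

/-- The variable `q` viewed inside `ℚ(q)`. -/
def qK : Kq := RatFunc.X

/-- `ℤ[q^{±1}]` regarded as a subring of `ℚ(q)`: the subring generated by `q` and `q⁻¹`. -/
def ZLaurent : Subring Kq := Subring.closure {qK, qK⁻¹}

/-- `(q;q)_m = ∏_{t=0}^{m-1} (1 - q^{t+1})` in `ℚ(q)`. -/
def qPochK (m : ℕ) : Kq := ∏ t ∈ Finset.range m, (1 - qK ^ (t + 1))

/-- The polynomial `∏_{i=1}^{n} (z_i;q)_{k_i}/(q;q)_{k_i}` in `ℚ(q)[z_1,…,z_n]`. -/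
def basisPoly (n : ℕ) (k : Fin n → ℕ) : MvPolynomial (Fin n) Kq :=
  ∏ i : Fin n, (MvPolynomial.C (qPochK (k i))⁻¹ *
    ∏ t ∈ Finset.range (k i), (1 - MvPolynomial.C (qK ^ t) * MvPolynomial.X i))

/-! ### Basic facts about `qK` and `ZLaurent` -/

lemma qK_ne_zero : qK ≠ 0 := RatFunc.X_ne_zero

lemma qK_pow_ne_one {m : ℕ} (hm : 0 < m) : qK ^ m ≠ 1 := by
  intro h
  have : (Polynomial.X : Polynomial ℚ) ^ m = 1 := by
    apply RatFunc.algebraMap_injective ℚ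
    simpa [qK, RatFunc.algebraMap_X, map_pow] using h
  have := congrArg Polynomial.natDegree this
  simp [Polynomial.natDegree_X_pow] at this
  omega

lemma one_sub_qK_pow_ne_zero {m : ℕ} (hm : 0 < m) : (1 : Kq) - qK ^ m ≠ 0 :=
  sub_ne_zero.mpr (Ne.symm (qK_pow_ne_one hm))

lemma qPochK_ne_zero (m : ℕ) : qPochK m ≠ 0 := by
  refine Finset.prod_ne_zero_iff.mpr fun t _ => one_sub_qK_pow_ne_zero (by omega)

lemma qK_mem : qK ∈ ZLaurent := Subring.subset_closure (Set.mem_insert _ _)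

lemma qK_inv_mem : qK⁻¹ ∈ ZLaurent :=
  Subring.subset_closure (Set.mem_insert_of_mem _ rfl)

lemma qK_zpow_mem (m : ℤ) : qK ^ m ∈ ZLaurent := by
  rcases m with m | m
  · simpa using pow_mem qK_mem m
  · rw [zpow_negSucc, ← inv_pow]
    exact pow_mem qK_inv_mem _

lemma qPochK_succ (k : ℕ) : qPochK (k + 1) = qPochK k * (1 - qK ^ (k + 1)) :=
  Finset.prod_range_succ _ _

/-! ### The values `(q^{-j};q)_k / (q;q)_k` -/

/-- `(q^{-j}; q)_k` -/
def Pjk (j k : ℕ) : Kq := ∏ t ∈ Finset.range k, (1 - qK ^ ((t : ℤ) - j))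

/-- `(q^{-j}; q)_k / (q;q)_k` -/
def Gjk (j k : ℕ) : Kq := Pjk j k * (qPochK k)⁻¹

lemma Pjk_succ_right (j k : ℕ) : Pjk j (k + 1) = Pjk j k * (1 - qK ^ ((k : ℤ) - j)) :=
  Finset.prod_range_succ _ _

lemma Pjk_succ_succ (j k : ℕ) :
    Pjk (j + 1) (k + 1) = (1 - qK ^ (-(j : ℤ) - 1)) * Pjk j k := by
  rw [Pjk, Finset.prod_range_succ', mul_comm]
  congr 1
  · congr 1
    push_cast
    ring
  · refine Finset.prod_congr rfl fun t _ => ?_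
    congr 1
    push_cast
    ring

lemma Gjk_pascal (j k : ℕ) :
    Gjk (j + 1) (k + 1) = Gjk j (k + 1) - qK ^ (-(j : ℤ) - 1) * Gjk j k := by
  have hq : qK ≠ 0 := qK_ne_zero
  have hD : qPochK k ≠ 0 := qPochK_ne_zero k
  have hD' : qPochK (k + 1) ≠ 0 := qPochK_ne_zero (k + 1)
  have hkj : qK ^ ((k : ℤ) - j) = qK ^ ((k : ℤ) + 1) * qK ^ (-(j : ℤ) - 1) := by
    rw [← zpow_add₀ hq]; congr 1; ring
  have hk1 : (qK : Kq) ^ ((k : ℤ) + 1) = qK ^ (k + 1) := by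
    rw [show ((k : ℤ) + 1) = ((k + 1 : ℕ) : ℤ) by push_cast; ring, zpow_natCast]
  have hB : (1 : Kq) - qK ^ (k + 1) ≠ 0 := one_sub_qK_pow_ne_zero (by omega)
  rw [Gjk, Gjk, Gjk, Pjk_succ_succ, Pjk_succ_right, qPochK_succ, hkj, hk1]
  set A := qK ^ (-(j : ℤ) - 1)
  set B := (qK : Kq) ^ (k + 1)
  field_simp
  ring

lemma Gjk_zero_right (j : ℕ) : Gjk j 0 = 1 := by
  simp [Gjk, Pjk, qPochK]

lemma Gjk_eq_zero_of_lt {j k : ℕ} (h : j < k) : Gjk j k = 0 := by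
  rw [Gjk, Pjk, Finset.prod_eq_zero (Finset.mem_range.mpr h), zero_mul]
  simp

lemma Gjk_mem (j k : ℕ) : Gjk j k ∈ ZLaurent := by
  induction j generalizing k with
  | zero =>
    cases k with
    | zero => rw [Gjk_zero_right]; exact one_mem _
    | succ k => rw [Gjk_eq_zero_of_lt (Nat.succ_pos k)]; exact zero_mem _
  | succ j ih =>
    cases k with
    | zero => rw [Gjk_zero_right]; exact one_mem _
    | succ k =>
      rw [Gjk_pascal]
      exact sub_mem (ih (k + 1)) (mul_mem (qK_zpow_mem _) (ih k))

/-- The inverse of the diagonal value `Gjk k k`. -/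
def diagInv (k : ℕ) : Kq := (-1) ^ k * qK ^ (∑ i ∈ Finset.range (k + 1), i)

lemma diagInv_mem (k : ℕ) : diagInv k ∈ ZLaurent :=
  mul_mem (pow_mem (neg_mem (one_mem _)) _) (pow_mem qK_mem _)

lemma Gjk_diag (k : ℕ) : Gjk k k * diagInv k = 1 := by
  induction k with
  | zero => simp [Gjk_zero_right, diagInv]
  | succ k ih =>
    have hB : (1 : Kq) - qK ^ (k + 1) ≠ 0 := one_sub_qK_pow_ne_zero (by omega)
    have hG : Gjk (k + 1) (k + 1)
        = (1 - qK ^ (-(k : ℤ) - 1)) * Gjk k k * (1 - qK ^ (k + 1))⁻¹ := by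
      rw [Gjk, Pjk_succ_succ, qPochK_succ, mul_inv, Gjk]
      ring
    have hd : diagInv (k + 1) = diagInv k * (-(qK ^ (k + 1))) := by
      rw [diagInv, diagInv, pow_succ, Finset.sum_range_succ, pow_add]
      ring
    have h1 : (1 - qK ^ (-(k : ℤ) - 1)) * (-(qK ^ (k + 1))) = 1 - qK ^ (k + 1) := by
      have h2 : qK ^ (-(k : ℤ) - 1) * qK ^ (k + 1) = 1 := by
        rw [← zpow_natCast qK (k + 1), ← zpow_add₀ qK_ne_zero]
        norm_num
      linear_combination h2
    rw [hG, hd]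
    calc (1 - qK ^ (-(k : ℤ) - 1)) * Gjk k k * (1 - qK ^ (k + 1))⁻¹
          * (diagInv k * (-(qK ^ (k + 1))))
        = (Gjk k k * diagInv k) * ((1 - qK ^ (-(k : ℤ) - 1)) * (-(qK ^ (k + 1)))
            * (1 - qK ^ (k + 1))⁻¹) := by ring
      _ = 1 := by rw [ih, h1, one_mul, mul_inv_cancel₀ hB]

/-! ### Span of the basis polynomials -/

/-- A single factor of `basisPoly`. -/
def bFac (n : ℕ) (m : ℕ) (i : Fin n) : MvPolynomial (Fin n) Kq :=
  MvPolynomial.C (qPochK m)⁻¹ *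
    ∏ t ∈ Finset.range m, (1 - MvPolynomial.C (qK ^ t) * MvPolynomial.X i)

lemma basisPoly_eq (n : ℕ) (k : Fin n → ℕ) : basisPoly n k = ∏ i : Fin n, bFac n (k i) i := rfl

lemma basisPoly_zero (n : ℕ) : basisPoly n (fun _ => 0) = 1 := by
  simp [basisPoly, qPochK]

lemma bFac_succ (n : ℕ) (m : ℕ) (i : Fin n) :
    bFac n (m + 1) i
      = MvPolynomial.C (1 - qK ^ (m + 1))⁻¹ *
        ((1 - MvPolynomial.C (qK ^ m) * MvPolynomial.X i) * bFac n m i) := by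
  rw [bFac, bFac, qPochK_succ, Finset.prod_range_succ, mul_inv, map_mul]
  ring

lemma basisPoly_update (n : ℕ) (k : Fin n → ℕ) (i : Fin n) :
    basisPoly n (Function.update k i (k i + 1))
      = MvPolynomial.C (1 - qK ^ (k i + 1))⁻¹ *
        ((1 - MvPolynomial.C (qK ^ (k i)) * MvPolynomial.X i) * basisPoly n k) := by
  rw [basisPoly_eq, basisPoly_eq]
  have h1 : ∀ j : Fin n, bFac n (Function.update k i (k i + 1) j) j
      = Function.update (fun j => bFac n (k j) j) i (bFac n (k i + 1) i) j := by
    intro j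
    by_cases hj : j = i
    · subst hj; simp
    · simp [Function.update_of_ne hj]
  rw [Finset.prod_congr rfl fun j _ => h1 j,
    Finset.prod_update_of_mem (Finset.mem_univ i),
    Finset.prod_eq_mul_prod_sdiff_singleton_of_mem (Finset.mem_univ i) (fun j => bFac n (k j) j),
    bFac_succ]
  ring

lemma X_mul_basisPoly (n : ℕ) (k : Fin n → ℕ) (i : Fin n) :
    MvPolynomial.X i * basisPoly n k
      = MvPolynomial.C (qK ^ (k i))⁻¹ * basisPoly n k
        - MvPolynomial.C ((qK ^ (k i))⁻¹ * (1 - qK ^ (k i + 1)))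
          * basisPoly n (Function.update k i (k i + 1)) := by
  have hB : (1 : Kq) - qK ^ (k i + 1) ≠ 0 := one_sub_qK_pow_ne_zero (by omega)
  have h := basisPoly_update n k i
  have h2 : MvPolynomial.C (1 - qK ^ (k i + 1)) * basisPoly n (Function.update k i (k i + 1))
      = (1 - MvPolynomial.C (qK ^ (k i)) * MvPolynomial.X i) * basisPoly n k := by
    rw [h, ← mul_assoc, ← map_mul, mul_inv_cancel₀ hB, map_one, one_mul]
  have hq : (qK : Kq) ^ (k i) ≠ 0 := pow_ne_zero _ qK_ne_zero
  calc MvPolynomial.X i * basisPoly n k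
      = MvPolynomial.C ((qK ^ (k i))⁻¹)
        * ((MvPolynomial.C ((qK : Kq) ^ (k i)) * MvPolynomial.X i) * basisPoly n k) := by
        rw [← mul_assoc, ← mul_assoc, ← map_mul, inv_mul_cancel₀ hq, map_one, one_mul]
    _ = MvPolynomial.C ((qK ^ (k i))⁻¹)
        * (basisPoly n k
           - MvPolynomial.C (1 - qK ^ (k i + 1)) * basisPoly n (Function.update k i (k i + 1))) := by
        rw [h2]; ring
    _ = _ := by rw [map_mul]; ring

/-- All polynomials lie in the span of the `basisPoly`s. -/
lemma mem_span_basisPoly (n : ℕ) (f : MvPolynomial (Fin n) Kq) :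
    f ∈ Submodule.span Kq (Set.range (basisPoly n)) := by
  set V := Submodule.span Kq (Set.range (basisPoly n)) with hV
  have hone : (1 : MvPolynomial (Fin n) Kq) ∈ V :=
    Submodule.subset_span ⟨fun _ => 0, basisPoly_zero n⟩
  have hX : ∀ (p : MvPolynomial (Fin n) Kq), p ∈ V → ∀ i, p * MvPolynomial.X i ∈ V := by
    intro p hp i
    induction hp using Submodule.span_induction with
    | mem x hx =>
      obtain ⟨k, rfl⟩ := hx
      rw [mul_comm, X_mul_basisPoly]
      refine sub_mem ?_ ?_
      · rw [← MvPolynomial.smul_eq_C_mul]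
        exact Submodule.smul_mem _ _ (Submodule.subset_span ⟨k, rfl⟩)
      · rw [← MvPolynomial.smul_eq_C_mul]
        exact Submodule.smul_mem _ _ (Submodule.subset_span ⟨_, rfl⟩)
    | zero => simp only [zero_mul]; exact zero_mem V
    | add x y hx hy ihx ihy => rw [add_mul]; exact add_mem ihx ihy
    | smul a x hx ihx => rw [smul_mul_assoc]; exact Submodule.smul_mem _ _ ihx
  induction f using MvPolynomial.induction_on with
  | C a =>
    have : MvPolynomial.C (σ := Fin n) a = a • (1 : MvPolynomial (Fin n) Kq) := by
      rw [MvPolynomial.smul_eq_C_mul, mul_one]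
    rw [this]; exact Submodule.smul_mem _ _ hone
  | add p q hp hq => exact add_mem hp hq
  | mul_X p i hp => exact hX p hp i

/-! ### Evaluation of the basis polynomials -/

lemma eval_basisPoly (n : ℕ) (k j : Fin n → ℕ) :
    MvPolynomial.eval (fun i => qK ^ (-(j i : ℤ))) (basisPoly n k)
      = ∏ i : Fin n, Gjk (j i) (k i) := by
  rw [basisPoly, map_prod]
  refine Finset.prod_congr rfl fun i _ => ?_
  rw [map_mul, MvPolynomial.eval_C, map_prod, Gjk, mul_comm]
  congr 1
  refine Finset.prod_congr rfl fun t _ => ?_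
  rw [map_sub, map_one, map_mul, MvPolynomial.eval_C, MvPolynomial.eval_X]
  congr 1
  rw [← zpow_natCast qK t, ← zpow_add₀ qK_ne_zero]
  congr 1

/-- If `f ∈ ℚ(q)[z_1,…,z_n]` satisfies `f(q^{m_1},…,q^{m_n}) ∈ ℤ[q^{±1}]` for all integers
`m_1,…,m_n`, then `f` is a `ℤ[q^{±1}]`-linear combination of the polynomials
`∏_i (z_i;q)_{k_i}/(q;q)_{k_i}` with `k_i` nonnegative integers. -/
theorem stmt_5 (n : ℕ) (hn : 0 < n) (f : MvPolynomial (Fin n) Kq)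
    (hf : ∀ m : Fin n → ℤ, MvPolynomial.eval (fun i => qK ^ (m i)) f ∈ ZLaurent) :
    ∃ c : (Fin n → ℕ) →₀ Kq, (∀ k, c k ∈ ZLaurent) ∧
      f = c.sum fun k a => MvPolynomial.C a * basisPoly n k := by
  obtain ⟨c, hc⟩ := Finsupp.mem_span_range_iff_exists_finsupp.mp (mem_span_basisPoly n f)
  have hsum : f = c.sum fun k a => MvPolynomial.C a * basisPoly n k := by
    rw [← hc]
    exact Finsupp.sum_congr fun k _ => MvPolynomial.smul_eq_C_mul _ _
  have heval : ∀ j : Fin n → ℕ,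
      (∑ k ∈ c.support, c k * ∏ i : Fin n, Gjk (j i) (k i)) ∈ ZLaurent := by
    intro j
    have h0 := hf (fun i => -(j i : ℤ))
    rw [hsum, Finsupp.sum, map_sum] at h0
    have heq : ∀ k ∈ c.support, c k * ∏ i : Fin n, Gjk (j i) (k i)
        = (MvPolynomial.eval fun i => qK ^ (-(j i : ℤ)))
            (MvPolynomial.C (c k) * basisPoly n k) := by
      intro k _
      rw [map_mul, MvPolynomial.eval_C, eval_basisPoly]
    rw [Finset.sum_congr rfl heq]
    exact h0
  have key : ∀ N : ℕ, ∀ j : Fin n → ℕ, (∑ i, j i) = N → c j ∈ ZLaurent := by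
    intro N
    induction N using Nat.strong_induction_on with
    | _ N ih =>
      intro j hj
      by_cases hjs : j ∈ c.support
      · have hsplit : c j * (∏ i : Fin n, Gjk (j i) (j i))
              + ∑ k ∈ c.support.erase j, c k * ∏ i : Fin n, Gjk (j i) (k i)
            = ∑ k ∈ c.support, c k * ∏ i : Fin n, Gjk (j i) (k i) :=
          Finset.add_sum_erase c.support (fun k => c k * ∏ i : Fin n, Gjk (j i) (k i)) hjs
        have hrest : (∑ k ∈ c.support.erase j, c k * ∏ i : Fin n, Gjk (j i) (k i))
            ∈ ZLaurent := by
          refine sum_mem fun k hk => ?_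
          have hkj : k ≠ j := Finset.ne_of_mem_erase hk
          by_cases hle : ∀ i, k i ≤ j i
          · have hlt : (∑ i, k i) < N := by
              rw [← hj]
              refine Finset.sum_lt_sum (fun i _ => hle i) ?_
              obtain ⟨i, hi⟩ := Function.ne_iff.mp hkj
              exact ⟨i, Finset.mem_univ i, lt_of_le_of_ne (hle i) hi⟩
            exact mul_mem (ih _ hlt k rfl) (prod_mem fun i _ => Gjk_mem _ _)
          · push_neg at hle
            obtain ⟨i, hi⟩ := hle
            rw [Finset.prod_eq_zero (Finset.mem_univ i) (Gjk_eq_zero_of_lt hi), mul_zero]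
            exact zero_mem _
        have hcjE : c j * ∏ i : Fin n, Gjk (j i) (j i) ∈ ZLaurent := by
          have h3 := heval j
          rw [← hsplit] at h3
          simpa using sub_mem h3 hrest
        have hunit : (∏ i : Fin n, Gjk (j i) (j i)) * (∏ i : Fin n, diagInv (j i)) = 1 := by
          rw [← Finset.prod_mul_distrib]
          exact Finset.prod_eq_one fun i _ => Gjk_diag (j i)
        have hcj : c j = (c j * ∏ i : Fin n, Gjk (j i) (j i)) * ∏ i : Fin n, diagInv (j i) := by
          rw [mul_assoc, hunit, mul_one]
        rw [hcj]
        exact mul_mem hcjE (prod_mem fun i _ => diagInv_mem _)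
      · rw [Finsupp.notMem_support_iff.mp hjs]
        exact zero_mem _
  exact ⟨c, fun k => key _ k rfl, hsum⟩
end
end

section
/- Let r ≥ 2 and let ξ ∈ ℂ be a primitive r-th root of unity. For all integers a and k with 0 ≤ k < r and every integral quadratic form Q, the element Σ_{n=0}^{r-1} ξ^{Q(n)}·binomξ(n+a, k) of ℤ[ξ] is divisible by x_{r-1-k} in ℤ[ξ]. -/
noncomputable section

/-- The Gaussian binomial coefficient `binomq(m,j) = (q^{m-j+1};q)_j/(q;q)_j` evaluated at
`q = ξ` (well-defined as written whenever the denominator is nonzero, e.g. for `j < r`). -/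
def binomXi (ξ : ℂ) (m : ℤ) (j : ℕ) : ℂ :=
  (∏ i ∈ Finset.range j, (1 - ξ ^ (m - (j : ℤ) + 1 + (i : ℤ)))) /
    (∏ i ∈ Finset.range j, (1 - ξ ^ (i + 1)))

/-- An integral quadratic form `Q(n) = a₂ n² + a₁ n + a₀`. -/
def IsIntegralQuadraticForm (Q : ℤ → ℤ) : Prop :=
  ∃ a₂ a₁ a₀ : ℤ, ∀ n : ℤ, Q n = a₂ * n ^ 2 + a₁ * n + a₀

/-- `x_k = ∏_{j=⌊k/2⌋+1}^{k} (1 - ξ^j)`. -/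
def xXi (ξ : ℂ) (k : ℕ) : ℂ := ∏ j ∈ Finset.Icc (k / 2 + 1) k, (1 - ξ ^ j)

open Finset

/-!
Write `Q(n) = αn² + βn + a₀` and `b = a - k`. Everything is `r`-periodic in `n`, so the
substitution `n ↦ n - b` turns the sum into `ξ^(a₀ + αb² - βb) / (ξ;ξ)_k` times
`W_k(β - 2αb)`, where `W_m(β) = ∑_{n<r} ξ^(αn² + βn) (ξ^(n+1);ξ)_m`.
If `m + j + 1 = r`, then `W_m(β) = (ξ;ξ)_m F_j(α + β - j)`, where
`F_j(γ) = ∑_t (-1)^t ξ^(γt + κ·C(t,2)) [j,t]_ξ` and `κ = 2α + 1`: both sides satisfy the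
same recursion in `m`, and for `m = r - 1` only the term `n = 0` of `W` survives.

It remains to show that `x_j` divides `F_j(γ)` for odd `κ`, by induction on `j`. Since
`F_{j+1}(γ) - F_{j+1}(γ + 1) = -ξ^γ (1 - ξ^(j+1)) F_j(γ + κ)`, all values of `F_{j+1}` agree
modulo `(1 - ξ^(j+1)) x_j`. The reflection `t ↦ j + 1 - t` provides one value that vanishes
(`j + 1` odd), or, for `j + 1 = 2m + 2`, a point where `F(γ + 1) = ξ^(m+1) F(γ)`; this yields
the extra factor `1 + ξ^(m+1) = x_{2m+2} / x_{2m+1}`.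
-/

section QBinom

variable {R : Type*} [CommRing R]

def qBinom (q : R) : ℕ → ℕ → R
  | 0, 0 => 1
  | 0, _ + 1 => 0
  | _ + 1, 0 => 1
  | M + 1, t + 1 => qBinom q M (t + 1) * q ^ (t + 1) + qBinom q M t

variable (q : R)

@[simp] lemma qBinom_zero_right (M : ℕ) : qBinom q M 0 = 1 := by cases M <;> rfl

lemma qBinom_succ_succ (M t : ℕ) :
    qBinom q (M + 1) (t + 1) = qBinom q M (t + 1) * q ^ (t + 1) + qBinom q M t := rfl

lemma qBinom_eq_zero_of_lt : ∀ {M t : ℕ}, M < t → qBinom q M t = 0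
  | 0, _ + 1, _ => rfl
  | M + 1, t + 1, h => by
    rw [qBinom_succ_succ, qBinom_eq_zero_of_lt (by omega), qBinom_eq_zero_of_lt (by omega)]
    ring

@[simp] lemma qBinom_self : ∀ M : ℕ, qBinom q M M = 1
  | 0 => rfl
  | M + 1 => by rw [qBinom_succ_succ, qBinom_eq_zero_of_lt q M.lt_succ_self, qBinom_self M]; ring

lemma qBinom_succ_one (s : ℕ) : qBinom q (s + 1) 1 = qBinom q s 1 + q ^ s := by
  induction s with
  | zero => simp [qBinom_eq_zero_of_lt]
  | succ s ih =>
    rw [qBinom_succ_succ, qBinom_zero_right]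
    linear_combination q * ih - qBinom_succ_succ q s 0 - qBinom_zero_right q s

lemma qBinom_add_succ_succ' :
    ∀ s t : ℕ, qBinom q (s + t + 1) (t + 1) =
      qBinom q (s + t) (t + 1) + q ^ s * qBinom q (s + t) t
  | s, 0 => by simpa using qBinom_succ_one q s
  | 0, t + 1 => by
    rw [zero_add, qBinom_self, qBinom_self, qBinom_eq_zero_of_lt q (by omega)]; ring
  | s + 1, t + 1 => by
    have ih₁ : qBinom q (s + t + 2) (t + 2) =
        qBinom q (s + t + 1) (t + 2) + q ^ s * qBinom q (s + t + 1) (t + 1) :=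
      qBinom_add_succ_succ' s (t + 1)
    have ih₂ : qBinom q (s + t + 2) (t + 1) =
        qBinom q (s + t + 1) (t + 1) + q ^ (s + 1) * qBinom q (s + t + 1) t := by
      simpa only [Nat.add_right_comm s 1 t] using qBinom_add_succ_succ' (s + 1) t
    have hs : s + 1 + (t + 1) = s + t + 2 := by ring
    rw [hs, qBinom_succ_succ]
    linear_combination q ^ (t + 2) * ih₁ - qBinom_succ_succ q (s + t + 1) (t + 1) + ih₂ -
      q ^ (s + 1) * qBinom_succ_succ q (s + t + 1) t
termination_by s t => s + t

/-- The subtraction `M - t` truncates, harmlessly: for `t > M` both sides vanish. -/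
lemma qBinom_succ_succ' (M t : ℕ) :
    qBinom q (M + 1) (t + 1) = qBinom q M (t + 1) + q ^ (M - t) * qBinom q M t := by
  rcases le_or_gt t M with htM | hMt
  · obtain ⟨s, rfl⟩ := Nat.exists_eq_add_of_le' htM
    rw [Nat.add_sub_cancel]
    exact qBinom_add_succ_succ' q s t
  · simp [qBinom_eq_zero_of_lt q hMt, qBinom_eq_zero_of_lt q (Nat.succ_lt_succ hMt),
      qBinom_eq_zero_of_lt q (hMt.trans t.lt_succ_self)]

lemma qBinom_add_symm : ∀ s t : ℕ, qBinom q (s + t) s = qBinom q (s + t) t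
  | 0, t => by simp
  | s + 1, 0 => by simp
  | s + 1, t + 1 => by
    have ih₁ : qBinom q (s + t + 1) (s + 1) = qBinom q (s + t + 1) t := by
      simpa only [Nat.add_right_comm s 1 t] using qBinom_add_symm (s + 1) t
    have ih₂ : qBinom q (s + t + 1) s = qBinom q (s + t + 1) (t + 1) :=
      qBinom_add_symm s (t + 1)
    have pascal : qBinom q (s + t + 2) (t + 1) =
        qBinom q (s + t + 1) (t + 1) + q ^ (s + 1) * qBinom q (s + t + 1) t := by
      simpa only [Nat.add_right_comm s 1 t] using qBinom_add_succ_succ' q (s + 1) t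
    have hs : s + 1 + (t + 1) = s + t + 2 := by ring
    rw [hs, pascal, qBinom_succ_succ, ih₁, ih₂]
    ring
termination_by s t => s + t

lemma sum_mul_qBinom_succ (f : ℕ → R) (M : ℕ) :
    ∑ t ∈ range (M + 2), f t * qBinom q (M + 1) t =
      ∑ t ∈ range (M + 1), (f t * q ^ t + f (t + 1)) * qBinom q M t := by
  have shift : ∑ t ∈ range (M + 1), f (t + 1) * (qBinom q M (t + 1) * q ^ (t + 1)) =
      ∑ t ∈ range (M + 1), f t * q ^ t * qBinom q M t - f 0 := by
    rw [sum_range_succ, qBinom_eq_zero_of_lt q M.lt_succ_self, sum_range_succ' _ M]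
    simp only [mul_assoc, mul_comm (q ^ _)]
    simp
  simp only [sum_range_succ' _ (M + 1), qBinom_succ_succ, qBinom_zero_right, mul_add, add_mul,
    sum_add_distrib, shift]
  ring

lemma sum_mul_qBinom_succ' (f : ℕ → R) (M : ℕ) :
    ∑ t ∈ range (M + 2), f t * qBinom q (M + 1) t =
      ∑ t ∈ range (M + 1), (f t + q ^ (M - t) * f (t + 1)) * qBinom q M t := by
  have shift : ∑ t ∈ range (M + 1), f (t + 1) * qBinom q M (t + 1) =
      ∑ t ∈ range (M + 1), f t * qBinom q M t - f 0 := by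
    rw [sum_range_succ, qBinom_eq_zero_of_lt q M.lt_succ_self, sum_range_succ' _ M]
    simp
  simp only [sum_range_succ' _ (M + 1), qBinom_succ_succ', qBinom_zero_right, mul_add, add_mul,
    sum_add_distrib, shift, mul_left_comm (f _), ← mul_assoc]
  ring

end QBinom

section QPochhammer

variable {R : Type*} [CommRing R]

def qPochhammer (z q : R) (m : ℕ) : R :=
  ∏ i ∈ range m, (1 - z * q ^ i)

lemma qPochhammer_succ (z q : R) (m : ℕ) :
    qPochhammer z q (m + 1) = qPochhammer z q m * (1 - z * q ^ m) :=
  prod_range_succ _ _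

lemma qPochhammer_succ' (z q : R) (m : ℕ) :
    qPochhammer z q (m + 1) = (1 - z) * qPochhammer (z * q) q m := by
  unfold qPochhammer
  rw [prod_range_succ', pow_zero, mul_one, mul_comm]
  congr 1
  exact prod_congr rfl fun i _ ↦ by ring

lemma qPochhammer_mul_succ_sub (z q : R) (m : ℕ) :
    qPochhammer (z * q) q (m + 1) - qPochhammer z q (m + 1) =
      z * (1 - q ^ (m + 1)) * qPochhammer (z * q) q m := by
  rw [qPochhammer_succ, qPochhammer_succ']
  ring

end QPochhammer

lemma cast_choose_two_succ (t : ℕ) : ((t + 1).choose 2 : ℤ) = t.choose 2 + t := by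
  rw [Nat.choose_succ_succ', Nat.choose_one_right]; push_cast; ring

lemma two_mul_cast_choose_two (n : ℕ) : 2 * (n.choose 2 : ℤ) = n * (n - 1) := by
  induction n with
  | zero => simp
  | succ n ih => rw [cast_choose_two_succ]; push_cast; linear_combination ih

lemma cast_choose_two_add (s t : ℕ) :
    ((s + t).choose 2 : ℤ) = s.choose 2 + t.choose 2 + s * t := by
  induction t with
  | zero => simp
  | succ t ih => rw [← add_assoc, cast_choose_two_succ, cast_choose_two_succ, ih]; push_cast; ring

section TwistedSum

variable {K : Type*} [Field K] {ξ : K}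

/-- For `κ = 1` this is `(ξ^γ; ξ)_M`, by the `q`-binomial theorem. -/
def twistedQBinomSum (ξ : K) (κ : ℤ) (M : ℕ) (γ : ℤ) : K :=
  ∑ t ∈ range (M + 1), (-1) ^ t * ξ ^ (γ * t + κ * (t.choose 2 : ℤ)) * qBinom ξ M t

lemma twistedQBinomSum_succ (hξ : ξ ≠ 0) (κ : ℤ) (M : ℕ) (γ : ℤ) :
    twistedQBinomSum ξ κ (M + 1) γ =
      twistedQBinomSum ξ κ M (γ + 1) - ξ ^ γ * twistedQBinomSum ξ κ M (γ + κ) := by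
  rw [twistedQBinomSum, sum_mul_qBinom_succ, twistedQBinomSum, twistedQBinomSum, mul_sum,
    ← sum_sub_distrib]
  refine sum_congr rfl fun t _ ↦ ?_
  have h₁ : ξ ^ (γ * t + κ * (t.choose 2 : ℤ)) * ξ ^ t =
      ξ ^ ((γ + 1) * t + κ * (t.choose 2 : ℤ)) := by
    rw [← zpow_natCast, ← zpow_add₀ hξ]; ring_nf
  have h₂ : ξ ^ (γ * (t + 1 : ℕ) + κ * ((t + 1).choose 2 : ℤ)) =
      ξ ^ γ * ξ ^ ((γ + κ) * t + κ * (t.choose 2 : ℤ)) := by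
    rw [← zpow_add₀ hξ, cast_choose_two_succ]; push_cast; ring_nf
  rw [← h₁, h₂, pow_succ]
  ring

lemma twistedQBinomSum_succ' (hξ : ξ ≠ 0) (κ : ℤ) (M : ℕ) (γ : ℤ) :
    twistedQBinomSum ξ κ (M + 1) γ =
      twistedQBinomSum ξ κ M γ - ξ ^ (γ + M) * twistedQBinomSum ξ κ M (γ + κ - 1) := by
  rw [twistedQBinomSum, sum_mul_qBinom_succ', twistedQBinomSum, twistedQBinomSum, mul_sum,
    ← sum_sub_distrib]
  refine sum_congr rfl fun t ht ↦ ?_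
  have htM : t ≤ M := Nat.lt_succ_iff.mp (mem_range.mp ht)
  have h : ξ ^ (M - t) * ξ ^ (γ * (t + 1 : ℕ) + κ * ((t + 1).choose 2 : ℤ)) =
      ξ ^ (γ + M) * ξ ^ ((γ + κ - 1) * t + κ * (t.choose 2 : ℤ)) := by
    rw [← zpow_natCast, ← zpow_add₀ hξ, ← zpow_add₀ hξ, cast_choose_two_succ,
      Nat.cast_sub htM]
    push_cast; ring_nf
  rw [pow_succ]
  linear_combination (-(-1) ^ t * qBinom ξ M t) * h

lemma twistedQBinomSum_sub_add_one (hξ : ξ ≠ 0) (κ : ℤ) (M : ℕ) (γ : ℤ) :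
    twistedQBinomSum ξ κ (M + 1) γ - twistedQBinomSum ξ κ (M + 1) (γ + 1) =
      -ξ ^ γ * (1 - ξ ^ (M + 1)) * twistedQBinomSum ξ κ M (γ + κ) := by
  have h : ξ ^ (γ + 1 + M) = ξ ^ γ * ξ ^ (M + 1) := by
    rw [← zpow_natCast, ← zpow_add₀ hξ]; push_cast; ring_nf
  rw [twistedQBinomSum_succ hξ, twistedQBinomSum_succ' hξ, h,
    show γ + 1 + κ - 1 = γ + κ by ring]
  ring

lemma twistedQBinomSum_reflect (hξ : ξ ≠ 0) (κ : ℤ) (M : ℕ) (γ : ℤ) :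
    twistedQBinomSum ξ κ M γ = (-1) ^ M * ξ ^ (γ * M + κ * (M.choose 2 : ℤ)) *
      twistedQBinomSum ξ κ M (κ * (1 - M) - γ) := by
  rw [twistedQBinomSum, ← sum_range_reflect, twistedQBinomSum, mul_sum]
  refine sum_congr rfl fun t ht ↦ ?_
  obtain ⟨s, rfl⟩ := Nat.exists_eq_add_of_le' (Nat.lt_succ_iff.mp (mem_range.mp ht))
  have hs : s + t + 1 - 1 - t = s := by omega
  have hsign : (-1 : K) ^ s = (-1) ^ (s + t) * (-1) ^ t := by
    rw [← pow_add, add_assoc, ← two_mul, pow_add, pow_mul]; simp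
  have hexp : ξ ^ (γ * s + κ * (s.choose 2 : ℤ)) =
      ξ ^ (γ * (s + t : ℕ) + κ * ((s + t).choose 2 : ℤ)) *
        ξ ^ ((κ * (1 - (s + t : ℕ)) - γ) * t + κ * (t.choose 2 : ℤ)) := by
    rw [← zpow_add₀ hξ]
    congr 1
    push_cast
    linear_combination (-κ) * cast_choose_two_add s t - κ * two_mul_cast_choose_two t
  rw [hs, qBinom_add_symm, hsign, hexp]
  ring

lemma twistedQBinomSum_zero (κ : ℤ) (γ : ℤ) : twistedQBinomSum ξ κ 0 γ = 1 := by
  simp [twistedQBinomSum]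

lemma twistedQBinomSum_odd_eq_zero [NeZero (2 : K)] (hξ : ξ ≠ 0) (κ : ℤ) (m : ℕ) :
    twistedQBinomSum ξ κ (2 * m + 1) (-(κ * m)) = 0 := by
  have hC : ((2 * m + 1).choose 2 : ℤ) = m * (2 * m + 1) := by
    have := two_mul_cast_choose_two (2 * m + 1); push_cast at this; linarith
  have h := twistedQBinomSum_reflect hξ κ (2 * m + 1) (-(κ * m))
  rw [hC, (odd_two_mul_add_one m).neg_one_pow] at h
  push_cast at h
  rw [show -(κ * m) * (2 * m + 1) + κ * (m * (2 * m + 1)) = 0 by ring,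
    show κ * (1 - (2 * m + 1)) - -(κ * m) = -(κ * m) by ring, zpow_zero] at h
  have h2 : (2 : K) * twistedQBinomSum ξ κ (2 * m + 1) (-(κ * m)) = 0 := by linear_combination h
  exact (mul_eq_zero.mp h2).resolve_left two_ne_zero

lemma twistedQBinomSum_two_mul_add_two_shift (hξ : ξ ≠ 0) (μ : ℤ) (m : ℕ) :
    twistedQBinomSum ξ (2 * μ + 1) (2 * m + 2) (-(μ * (2 * m + 1) + m)) =
      ξ ^ (m + 1) *
        twistedQBinomSum ξ (2 * μ + 1) (2 * m + 2) (-(μ * (2 * m + 1) + m + 1)) := by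
  have hC : ((2 * m + 2).choose 2 : ℤ) = (m + 1) * (2 * m + 1) := by
    have := two_mul_cast_choose_two (2 * m + 2); push_cast at this; linarith
  have h := twistedQBinomSum_reflect hξ (2 * μ + 1) (2 * m + 2) (-(μ * (2 * m + 1) + m))
  rw [hC, Even.neg_one_pow ⟨m + 1, by ring⟩, one_mul] at h
  push_cast at h
  rwa [show -(μ * (2 * m + 1) + m) * (2 * m + 2) + (2 * μ + 1) * ((m + 1) * (2 * m + 1)) =
      ((m + 1 : ℕ) : ℤ) by push_cast; ring, zpow_natCast,
    show (2 * μ + 1) * (1 - (2 * m + 2)) - -(μ * (2 * m + 1) + m) = -(μ * (2 * m + 1) + m + 1) by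
      ring] at h

end TwistedSum

section Span

variable {R : Type*} [CommRing R] {S : Subring R}

lemma mul_mem_span_singleton {s x y : R} (hs : s ∈ S) (h : y ∈ S ∙ x) : s * y ∈ S ∙ x :=
  Submodule.smul_mem _ ⟨s, hs⟩ h

lemma mul_mem_span_singleton_mul (z : R) {x y : R} (h : y ∈ S ∙ x) :
    z * y ∈ S ∙ (z * x) := by
  obtain ⟨a, rfl⟩ := Submodule.mem_span_singleton.mp h
  exact Submodule.mem_span_singleton.mpr ⟨a, by rw [Subring.smul_def, Subring.smul_def]; ring⟩

lemma span_singleton_mul_le {s : R} (x : R) (hs : s ∈ S) : S ∙ (x * s) ≤ S ∙ x := by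
  rw [Submodule.span_singleton_le_iff_mem, mul_comm]
  exact mul_mem_span_singleton hs (Submodule.mem_span_singleton_self x)

end Span

lemma AddSubgroup.sub_mem_of_forall_sub_add_one_mem {G : Type*} [AddCommGroup G]
    (p : AddSubgroup G) {f : ℤ → G} (h : ∀ γ, f γ - f (γ + 1) ∈ p) (γ γ' : ℤ) :
    f γ - f γ' ∈ p := by
  suffices ∀ d : ℤ, f γ - f (γ + d) ∈ p by simpa using this (γ' - γ)
  intro d
  induction d using Int.induction_on with
  | zero => simp
  | succ d ih => simpa [add_assoc] using p.add_mem ih (h (γ + d))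
  | pred d ih =>
    have := p.sub_mem ih (h (γ + (-d - 1)))
    rwa [show γ + (-d - 1) + 1 = γ + -d by ring, sub_sub_sub_cancel_right] at this

lemma IsPrimitiveRoot.zpow_mem_closure {K : Type*} [Field K] {ξ : K} {r : ℕ}
    (hξ : IsPrimitiveRoot ξ r) (hr : 0 < r) (γ : ℤ) : ξ ^ γ ∈ Subring.closure {ξ} := by
  have hmem : ξ ∈ Subring.closure {ξ} := Subring.subset_closure (Set.mem_singleton ξ)
  have hinv : ξ⁻¹ = ξ ^ (r - 1) :=
    inv_eq_of_mul_eq_one_right (by rw [← pow_succ', Nat.sub_add_cancel hr, hξ.pow_eq_one])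
  cases γ with
  | ofNat n => rw [Int.ofNat_eq_natCast, zpow_natCast]; exact pow_mem hmem n
  | negSucc n => rw [zpow_negSucc, ← inv_pow, hinv]; exact pow_mem (pow_mem hmem _) _

section Divisibility

variable {ξ : ℂ}

lemma xXi_zero : xXi ξ 0 = 1 := rfl

lemma xXi_two_mul_add_one (m : ℕ) :
    xXi ξ (2 * m + 1) = xXi ξ (2 * m) * (1 - ξ ^ (2 * m + 1)) := by
  rw [xXi, xXi, show (2 * m + 1) / 2 = 2 * m / 2 by omega]
  exact prod_Icc_succ_top (by omega) _

lemma xXi_two_mul_add_two {m : ℕ} (h : ξ ^ (m + 1) ≠ 1) :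
    xXi ξ (2 * m + 2) = xXi ξ (2 * m + 1) * (1 + ξ ^ (m + 1)) := by
  have hsplit : (1 - ξ ^ (m + 1)) * xXi ξ (2 * m + 2) =
      xXi ξ (2 * m + 1) * (1 - ξ ^ (2 * m + 2)) := by
    rw [xXi, xXi, show (2 * m + 2) / 2 + 1 = m + 1 + 1 by omega,
      show (2 * m + 1) / 2 + 1 = m + 1 by omega, ← prod_Icc_succ_top (by omega),
      ← insert_Icc_add_one_left_eq_Icc (show m + 1 ≤ 2 * m + 1 + 1 by omega),
      prod_insert (by simp)]
  refine mul_left_cancel₀ (sub_ne_zero.mpr h.symm) ?_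
  linear_combination hsplit

variable {r : ℕ} {κ : ℤ}

lemma twistedQBinomSum_succ_sub_mem (hξ : IsPrimitiveRoot ξ r) (hr : 0 < r) {M : ℕ} {x : ℂ}
    (ih : ∀ γ, twistedQBinomSum ξ κ M γ ∈ Subring.closure {ξ} ∙ x) (γ γ' : ℤ) :
    twistedQBinomSum ξ κ (M + 1) γ - twistedQBinomSum ξ κ (M + 1) γ' ∈
      Subring.closure {ξ} ∙ ((1 - ξ ^ (M + 1)) * x) := by
  refine AddSubgroup.sub_mem_of_forall_sub_add_one_mem
    (Subring.closure {ξ} ∙ ((1 - ξ ^ (M + 1)) * x)).toAddSubgroup (fun γ ↦ ?_) γ γ'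
  rw [Submodule.mem_toAddSubgroup, twistedQBinomSum_sub_add_one (hξ.ne_zero hr.ne'), mul_assoc]
  exact mul_mem_span_singleton (neg_mem (hξ.zpow_mem_closure hr γ))
    (mul_mem_span_singleton_mul _ (ih _))

lemma twistedQBinomSum_two_mul_add_one_mem (hξ : IsPrimitiveRoot ξ r) {m : ℕ}
    (hm : 2 * m + 1 < r)
    (ih : ∀ γ, twistedQBinomSum ξ κ (2 * m) γ ∈ Subring.closure {ξ} ∙ xXi ξ (2 * m))
    (γ : ℤ) :
    twistedQBinomSum ξ κ (2 * m + 1) γ ∈ Subring.closure {ξ} ∙ xXi ξ (2 * m + 1) := by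
  have hr : 0 < r := by omega
  have h := twistedQBinomSum_succ_sub_mem hξ hr ih γ (-(κ * m))
  rwa [twistedQBinomSum_odd_eq_zero (hξ.ne_zero hr.ne'), sub_zero, mul_comm,
    ← xXi_two_mul_add_one] at h

lemma twistedQBinomSum_two_mul_add_two_mem (hξ : IsPrimitiveRoot ξ r) {μ : ℤ} {m : ℕ}
    (hm : 2 * m + 2 < r)
    (ih : ∀ γ, twistedQBinomSum ξ (2 * μ + 1) (2 * m + 1) γ ∈
      Subring.closure {ξ} ∙ xXi ξ (2 * m + 1)) (γ : ℤ) :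
    twistedQBinomSum ξ (2 * μ + 1) (2 * m + 2) γ ∈
      Subring.closure {ξ} ∙ xXi ξ (2 * m + 2) := by
  have hr : 0 < r := by omega
  have hξ₀ : ξ ≠ 0 := hξ.ne_zero hr.ne'
  have hξm : ξ ^ (m + 1) ≠ 1 := hξ.pow_ne_one_of_pos_of_lt (by omega) (by omega)
  have hx := xXi_two_mul_add_two hξm
  set γ₀ : ℤ := -(μ * (2 * m + 1) + m + 1)
  have hγ₀_eq : twistedQBinomSum ξ (2 * μ + 1) (2 * m + 2) γ₀ = -ξ ^ γ₀ *
      ((1 + ξ ^ (m + 1)) *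
        twistedQBinomSum ξ (2 * μ + 1) (2 * m + 1) (γ₀ + (2 * μ + 1))) := by
    have hD := twistedQBinomSum_sub_add_one hξ₀ (2 * μ + 1) (2 * m + 1) γ₀
    rw [show γ₀ + 1 = -(μ * (2 * m + 1) + m) by ring,
      twistedQBinomSum_two_mul_add_two_shift hξ₀] at hD
    refine mul_left_cancel₀ (sub_ne_zero.mpr hξm.symm) ?_
    linear_combination hD
  have hγ₀ : twistedQBinomSum ξ (2 * μ + 1) (2 * m + 2) γ₀ ∈
      Subring.closure {ξ} ∙ xXi ξ (2 * m + 2) := by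
    rw [hγ₀_eq, hx, mul_comm (xXi ξ _)]
    exact mul_mem_span_singleton (neg_mem (hξ.zpow_mem_closure hr γ₀))
      (mul_mem_span_singleton_mul _ (ih _))
  have hle : Subring.closure {ξ} ∙ ((1 - ξ ^ (2 * m + 2)) * xXi ξ (2 * m + 1)) ≤
      Subring.closure {ξ} ∙ xXi ξ (2 * m + 2) := by
    rw [show (1 - ξ ^ (2 * m + 2)) * xXi ξ (2 * m + 1) =
      xXi ξ (2 * m + 2) * (1 - ξ ^ (m + 1)) by rw [hx]; ring]
    exact span_singleton_mul_le _
      (sub_mem (one_mem _) (pow_mem (Subring.subset_closure (Set.mem_singleton ξ)) _))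
  simpa using add_mem (hle (twistedQBinomSum_succ_sub_mem hξ hr ih γ γ₀)) hγ₀

theorem twistedQBinomSum_mem_span_xXi (hξ : IsPrimitiveRoot ξ r) (hκ : Odd κ) {M : ℕ}
    (hM : M < r) (γ : ℤ) :
    twistedQBinomSum ξ κ M γ ∈ Subring.closure {ξ} ∙ xXi ξ M := by
  induction M generalizing γ with
  | zero =>
    rw [twistedQBinomSum_zero, xXi_zero]
    exact Submodule.mem_span_singleton_self 1
  | succ M ih =>
    rcases Nat.even_or_odd' M with ⟨m, rfl | rfl⟩
    · exact twistedQBinomSum_two_mul_add_one_mem hξ hM (ih (by omega)) γ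
    · obtain ⟨μ, rfl⟩ := hκ
      exact twistedQBinomSum_two_mul_add_two_mem hξ hM (ih (by omega)) γ

end Divisibility

lemma Function.Periodic.sum_range_add {M : Type*} [AddCommMonoid M] {G : ℤ → M} {r : ℕ}
    (hG : Function.Periodic G r) (c : ℤ) :
    ∑ n ∈ range r, G (n + c) = ∑ n ∈ range r, G n := by
  have step : ∀ G : ℤ → M, Function.Periodic G r →
      ∑ n ∈ range r, G (n + 1) = ∑ n ∈ range r, G n := by
    intro G hG
    cases r with
    | zero => simp
    | succ r =>
      rw [sum_range_succ, sum_range_succ']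
      push_cast
      congr 1
      simpa using hG 0
  induction c using Int.induction_on with
  | zero => simp
  | succ c ih =>
    have h := step _ (hG.add_const (c : ℤ))
    rw [← ih, ← h]
    exact sum_congr rfl fun n _ ↦ congrArg G (by ring)
  | pred c ih =>
    have h := step _ (hG.add_const (-c - 1 : ℤ))
    rw [← ih, ← h]
    exact sum_congr rfl fun n _ ↦ congrArg G (by ring)

section PochhammerSum

variable {K : Type*} [Field K] {ξ : K} {r : ℕ}

def quadraticPochhammerSum (ξ : K) (r : ℕ) (α β : ℤ) (m : ℕ) : K :=
  ∑ n ∈ range r, ξ ^ (α * n ^ 2 + β * n) * qPochhammer (ξ ^ ((n : ℤ) + 1)) ξ m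

lemma zpow_add_natCast_mul (hξ : ξ ≠ 0) (h : ξ ^ r = 1) (e k : ℤ) :
    ξ ^ (e + r * k) = ξ ^ e := by
  rw [zpow_add₀ hξ, zpow_mul, zpow_natCast, h, one_zpow, mul_one]

lemma sum_zpow_mul_qPochhammer_shift (hξ : ξ ≠ 0) (h : ξ ^ r = 1) (α β b : ℤ) (m : ℕ) :
    ∑ n ∈ range r, ξ ^ (α * n ^ 2 + β * n) * qPochhammer (ξ ^ ((n : ℤ) + b + 1)) ξ m =
      ξ ^ (α * b ^ 2 - β * b) * quadraticPochhammerSum ξ r α (β - 2 * α * b) m := by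
  set G : ℤ → K :=
    fun x ↦ ξ ^ (α * (x - b) ^ 2 + β * (x - b)) * qPochhammer (ξ ^ (x + 1)) ξ m
  have hG : Function.Periodic G r := fun x ↦ by
    simp only [G]
    rw [show α * (x + r - b) ^ 2 + β * (x + r - b) =
        α * (x - b) ^ 2 + β * (x - b) + r * (2 * α * (x - b) + α * r + β) by ring,
      show x + r + 1 = x + 1 + r * 1 by ring, zpow_add_natCast_mul hξ h,
      zpow_add_natCast_mul hξ h]
  calc ∑ n ∈ range r, ξ ^ (α * n ^ 2 + β * n) * qPochhammer (ξ ^ ((n : ℤ) + b + 1)) ξ m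
      = ∑ n ∈ range r, G (n + b) :=
        sum_congr rfl fun n _ ↦ by simp only [G, add_sub_cancel_right]
    _ = ∑ n ∈ range r, G n := hG.sum_range_add b
    _ = _ := by
      rw [quadraticPochhammerSum, mul_sum]
      refine sum_congr rfl fun n _ ↦ ?_
      simp only [G]
      rw [← mul_assoc, ← zpow_add₀ hξ]
      ring_nf

lemma quadraticPochhammerSum_succ_sub (hξ : ξ ≠ 0) (h : ξ ^ r = 1) (α β : ℤ) (m : ℕ) :
    quadraticPochhammerSum ξ r α β (m + 1) -
        ξ ^ (α + β) * quadraticPochhammerSum ξ r α (β + 2 * α) (m + 1) =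
      (1 - ξ ^ (m + 1)) * quadraticPochhammerSum ξ r α (β + 1) m := by
  have hshift := sum_zpow_mul_qPochhammer_shift hξ h α β (-1) (m + 1)
  rw [show α * (-1) ^ 2 - β * -1 = α + β by ring,
    show β - 2 * α * -1 = β + 2 * α by ring] at hshift
  rw [← hshift, quadraticPochhammerSum, quadraticPochhammerSum, ← sum_sub_distrib, mul_sum]
  refine sum_congr rfl fun n _ ↦ ?_
  have hpoch := qPochhammer_mul_succ_sub (ξ ^ (n : ℤ)) ξ m
  rw [← zpow_add_one₀ hξ] at hpoch
  have hexp : ξ ^ (α * n ^ 2 + (β + 1) * n) = ξ ^ (α * n ^ 2 + β * n) * ξ ^ (n : ℤ) := by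
    rw [← zpow_add₀ hξ]; ring_nf
  rw [show (n : ℤ) + -1 + 1 = n by ring, ← mul_sub, hpoch, hexp]
  ring

lemma quadraticPochhammerSum_pred (hξ : IsPrimitiveRoot ξ r) (hr : 0 < r) (α β : ℤ) :
    quadraticPochhammerSum ξ r α β (r - 1) = qPochhammer ξ ξ (r - 1) := by
  rw [quadraticPochhammerSum, sum_eq_single 0 (fun n hn hn0 ↦ ?_) (by simp [hr])]
  · simp
  · have hnr := mem_range.mp hn
    refine mul_eq_zero_of_right _ (prod_eq_zero (i := r - 1 - n) (by simp; omega) ?_)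
    rw [← zpow_natCast, ← zpow_add₀ (hξ.ne_zero hr.ne'),
      show (n : ℤ) + 1 + ((r - 1 - n : ℕ) : ℤ) = r by omega, hξ.zpow_eq_one, sub_self]

lemma qPochhammer_self_ne_zero (hξ : IsPrimitiveRoot ξ r) {k : ℕ} (hk : k < r) :
    qPochhammer ξ ξ k ≠ 0 :=
  prod_ne_zero_iff.mpr fun i hi ↦ by
    rw [← pow_succ']
    exact sub_ne_zero.mpr (hξ.pow_ne_one_of_pos_of_lt i.succ_ne_zero (by simp at hi; omega)).symm

theorem quadraticPochhammerSum_eq_mul_twistedQBinomSum (hξ : IsPrimitiveRoot ξ r) (α : ℤ)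
    {m j : ℕ} (hm : m + j + 1 = r) (β : ℤ) : quadraticPochhammerSum ξ r α β m =
      qPochhammer ξ ξ m * twistedQBinomSum ξ (2 * α + 1) j (α + β - j) := by
  have hr : 0 < r := by omega
  have hξ₀ := hξ.ne_zero hr.ne'
  induction j generalizing m β with
  | zero =>
    rw [twistedQBinomSum_zero, mul_one, show m = r - 1 by omega,
      quadraticPochhammerSum_pred hξ hr]
  | succ j ih =>
    have hrec := quadraticPochhammerSum_succ_sub hξ₀ hξ.pow_eq_one α (β - 1) m
    set γ : ℤ := α + β - 1 - j
    rw [ih (by omega), ih (by omega), sub_add_cancel,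
      show α + (β - 1) - j = γ by ring,
      show α + (β - 1 + 2 * α) - j = γ + (2 * α + 1) - 1 by ring,
      show α + (β - 1) = γ + j by ring] at hrec
    rw [show α + β - ((j + 1 : ℕ) : ℤ) = γ by push_cast; ring, twistedQBinomSum_succ' hξ₀]
    have hm₁ : ξ ^ (m + 1) ≠ 1 := hξ.pow_ne_one_of_pos_of_lt (by omega) (by omega)
    refine mul_left_cancel₀ (sub_ne_zero.mpr hm₁.symm) ?_
    rw [qPochhammer_succ] at hrec
    linear_combination -hrec

end PochhammerSum

lemma binomXi_eq {ξ : ℂ} (hξ : ξ ≠ 0) (m : ℤ) (j : ℕ) :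
    binomXi ξ m j = qPochhammer (ξ ^ (m - j + 1)) ξ j / qPochhammer ξ ξ j := by
  rw [binomXi, qPochhammer, qPochhammer]
  congr 1 <;> refine prod_congr rfl fun i _ ↦ ?_
  · rw [zpow_add₀ hξ, zpow_natCast]
  · rw [pow_succ']

lemma sum_zpow_mul_binomXi {ξ : ℂ} {r k : ℕ} (hξ : IsPrimitiveRoot ξ r) (hk : k < r)
    (α β a : ℤ) :
    ∑ n ∈ range r, ξ ^ (α * n ^ 2 + β * n) * binomXi ξ (n + a) k =
      ξ ^ (α * (a - k) ^ 2 - β * (a - k)) * twistedQBinomSum ξ (2 * α + 1) (r - 1 - k)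
        (α + (β - 2 * α * (a - k)) - (r - 1 - k : ℕ)) := by
  have hξ₀ := hξ.ne_zero (by omega)
  have hshift := sum_zpow_mul_qPochhammer_shift hξ₀ hξ.pow_eq_one α β (a - k) k
  rw [quadraticPochhammerSum_eq_mul_twistedQBinomSum hξ α (j := r - 1 - k) (by omega)] at hshift
  calc ∑ n ∈ range r, ξ ^ (α * n ^ 2 + β * n) * binomXi ξ (n + a) k
      = (∑ n ∈ range r,
          ξ ^ (α * n ^ 2 + β * n) * qPochhammer (ξ ^ ((n : ℤ) + (a - k) + 1)) ξ k) /
            qPochhammer ξ ξ k := by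
        rw [sum_div]
        refine sum_congr rfl fun n _ ↦ ?_
        rw [binomXi_eq hξ₀, show (n : ℤ) + a - k + 1 = n + (a - k) + 1 by ring, mul_div_assoc]
    _ = _ := by
      rw [hshift]
      field_simp [qPochhammer_self_ne_zero hξ hk]

theorem stmt_8_general (r : ℕ) (ξ : ℂ) (hξ : IsPrimitiveRoot ξ r)
    (a : ℤ) (k : ℕ) (hk : k < r) (Q : ℤ → ℤ) (hQ : IsIntegralQuadraticForm Q) :
    ∃ c ∈ Subring.closure ({ξ} : Set ℂ),
      ∑ n ∈ Finset.range r, ξ ^ Q (n : ℤ) * binomXi ξ ((n : ℤ) + a) k =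
        xXi ξ (r - 1 - k) * c := by
  obtain ⟨α, β, a₀, hQ⟩ := hQ
  have hr : 0 < r := by omega
  have hconst : ∑ n ∈ range r, ξ ^ Q n * binomXi ξ (n + a) k =
      ξ ^ a₀ * ∑ n ∈ range r, ξ ^ (α * n ^ 2 + β * n) * binomXi ξ (n + a) k := by
    rw [mul_sum]
    refine sum_congr rfl fun n _ ↦ ?_
    rw [hQ, zpow_add₀ (hξ.ne_zero hr.ne')]
    ring
  obtain ⟨c, hc⟩ := Submodule.mem_span_singleton.mp
    (twistedQBinomSum_mem_span_xXi hξ ⟨α, rfl⟩ (M := r - 1 - k) (by omega) _)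
  refine ⟨ξ ^ a₀ * ξ ^ (α * (a - k) ^ 2 - β * (a - k)) * c,
    mul_mem (mul_mem (hξ.zpow_mem_closure hr _) (hξ.zpow_mem_closure hr _)) c.2, ?_⟩
  rw [hconst, sum_zpow_mul_binomXi hξ hk, ← hc, Subring.smul_def, smul_eq_mul]
  ring

/-- For `ξ` a primitive `r`-th root of unity, integers `a`, `0 ≤ k < r`, and an integral
quadratic form `Q`, the element `Σ_{n=0}^{r-1} ξ^{Q(n)} binomξ(n+a,k)` of `ℤ[ξ]` is
divisible by `x_{r-1-k}` in `ℤ[ξ]`. -/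
theorem stmt_8 (r : ℕ) (hr : 2 ≤ r) (ξ : ℂ) (hξ : IsPrimitiveRoot ξ r)
    (a : ℤ) (k : ℕ) (hk : k < r) (Q : ℤ → ℤ) (hQ : IsIntegralQuadraticForm Q) :
    ∃ c ∈ Subring.closure ({ξ} : Set ℂ),
      ∑ n ∈ Finset.range r, ξ ^ Q (n : ℤ) * binomXi ξ ((n : ℤ) + a) k =
        xXi ξ (r - 1 - k) * c :=
  stmt_8_general r ξ hξ a k hk Q hQ
end
end
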